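/- arXiv:1006.0920 — 2 statements merged into one kernel-verified Lean document; each statement's English description precedes it below -/
import Mathlib

section
/- Let π be a group and k ≥ 1. Let A_k denote the kernel of the natural homomorphism Aut(π) → Aut(π/Γ_{k+1}π). Then for every f ∈ A_k and x ∈ π one has x⁻¹f(x) ∈ Γ_{k+1}π; the assignment (x mod Γ₂π) ↦ (x⁻¹f(x) mod Γ_{k+2}π) is a well-defined group homomorphism τ_k(f) : π/Γ₂π → Γ_{k+1}π/Γ_{k+2}π; the resulting map τ_k : A_k → Hom(π/Γ₂π, Γ_{k+1}π/Γ_{k+2}π) is a group homomorphism; and τ_k(f) = 0 if and only if f induces the identity automorphism of π/Γ_{k+2}π. -/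
/-!
As `Γ_{k+1}π / Γ_{k+2}π` is central in `π / Γ_{k+2}π`, the displacement `x ↦ x⁻¹ f(x)` of
`f ∈ A_k` is a homomorphism modulo `Γ_{k+2}π` with values in an abelian subgroup, so it factors
through `π / Γ₂π`. For `k ≥ 1` its kernel contains `Γ_{k+1}π ⊆ Γ₂π`, i.e. `f` acts trivially on
`Γ_{k+1}π` modulo `Γ_{k+2}π`; then `x⁻¹ f(g x) = x⁻¹ f(x) · f(x⁻¹ g x)` gives
`τ_k(f ∘ g) = τ_k(f) · τ_k(g)`.
-/

open QuotientGroup Subgroup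

section Displacement

variable {π : Type*} [Group π] {M N : Subgroup π} [M.Normal]
  {F : Type*} [FunLike F π π] [MonoidHomClass F π π]

theorem QuotientGroup.mk_commute_of_commutator_le (hNM : ⁅N, ⊤⁆ ≤ M) {a : π} (ha : a ∈ N)
    (u : π ⧸ M) : Commute (a : π ⧸ M) u := by
  induction u using QuotientGroup.induction_on with
  | H g =>
    rw [Commute, SemiconjBy, ← mk_mul, ← mk_mul, eq_iff_div_mem]
    convert hNM (commutator_mem_commutator ha (mem_top g)) using 1
    rw [commutatorElement_def, div_eq_mul_inv, mul_inv_rev, ← mul_assoc]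

theorem QuotientGroup.mk_inv_mul_eq_one_iff {x y : π} :
    ((x⁻¹ * y : π) : π ⧸ M) = 1 ↔ (y : π ⧸ M) = x := by
  rw [eq_one_iff, eq_comm, QuotientGroup.eq]

def displacementHom (f : F) (hf : ∀ x, x⁻¹ * f x ∈ N) (hNM : ⁅N, ⊤⁆ ≤ M) : π →* π ⧸ M where
  toFun x := ((x⁻¹ * f x : π) : π ⧸ M)
  map_one' := by simp
  map_mul' x y := by
    have hconj : (x * y)⁻¹ * f (x * y) = y⁻¹ * (x⁻¹ * f x) * y * (y⁻¹ * f y) := by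
      rw [map_mul]; group
    have hc := mk_commute_of_commutator_le hNM (hf x) (y : π ⧸ M)
    rw [hconj]
    generalize x⁻¹ * f x = c at hc ⊢
    simp only [mk_mul, mk_inv]
    rw [mul_assoc (y : π ⧸ M)⁻¹, hc.eq, inv_mul_cancel_left]

variable {f : F}

theorem commutator_le_ker_displacementHom (hf : ∀ x, x⁻¹ * f x ∈ N) (hNM : ⁅N, ⊤⁆ ≤ M) :
    commutator π ≤ (displacementHom f hf hNM).ker := by
  rw [commutator_def, commutator_le]
  intro a _ b _
  rw [MonoidHom.mem_ker, map_commutatorElement, commutatorElement_eq_one_iff_commute]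
  exact mk_commute_of_commutator_le hNM (hf a) _

theorem QuotientGroup.mk_apply_eq_of_mem (hf : ∀ x, x⁻¹ * f x ∈ N) (hNM : ⁅N, ⊤⁆ ≤ M)
    (hN : N ≤ commutator π) {a : π} (ha : a ∈ N) :
    ((f a : π) : π ⧸ M) = a :=
  mk_inv_mul_eq_one_iff.mp (commutator_le_ker_displacementHom hf hNM (hN ha))

theorem QuotientGroup.mk_inv_mul_apply_eq_mul (hf : ∀ x, x⁻¹ * f x ∈ N) (hNM : ⁅N, ⊤⁆ ≤ M)
    (hN : N ≤ commutator π) {x y : π} (hy : x⁻¹ * y ∈ N) :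
    ((x⁻¹ * f y : π) : π ⧸ M) = ((x⁻¹ * f x : π) : π ⧸ M) * ((x⁻¹ * y : π) : π ⧸ M) := by
  have hsplit : x⁻¹ * f y = x⁻¹ * f x * f (x⁻¹ * y) := by
    rw [map_mul, map_inv]; group
  rw [hsplit, mk_mul, mk_apply_eq_of_mem hf hNM hN hy]

/-- `τ_k(f)` is the case `N = Γ_{k+1}π`, `M = Γ_{k+2}π`. -/
def johnsonHom (f : F) (hf : ∀ x, x⁻¹ * f x ∈ N) (hNM : ⁅N, ⊤⁆ ≤ M) :
    π ⧸ commutator π →* π ⧸ M :=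
  lift (commutator π) (displacementHom f hf hNM) (commutator_le_ker_displacementHom hf hNM)

theorem johnsonHom_mk (hf : ∀ x, x⁻¹ * f x ∈ N) (hNM : ⁅N, ⊤⁆ ≤ M) (x : π) :
    johnsonHom f hf hNM x = ((x⁻¹ * f x : π) : π ⧸ M) := rfl

theorem johnsonHom_mem_map_mk (hf : ∀ x, x⁻¹ * f x ∈ N) (hNM : ⁅N, ⊤⁆ ≤ M)
    (y : π ⧸ commutator π) : johnsonHom f hf hNM y ∈ N.map (mk' M) := by
  induction y using QuotientGroup.induction_on with
  | H x => exact ⟨_, hf x, rfl⟩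

end Displacement

/-- the `k`-th Johnson homomorphism `τ_k` on the kernel `A_k` of
`Aut(π) → Aut(π/Γ_{k+1}π)`.  Here `Γ_{n+1}π = lowerCentralSeries π n`, membership of an
automorphism `f` in `A_k` is expressed by `∀ x, f x ≡ x mod Γ_{k+1}π`, the subquotient
`Γ_{k+1}π/Γ_{k+2}π` is represented by the subgroup `A` of `π/Γ_{k+2}π` (the image of
`Γ_{k+1}π`), and `τ_k(f)` is a homomorphism `π/Γ₂π →* π/Γ_{k+2}π` with values in `A`. -/
theorem stmt3 (π : Type*) [Group π] (k : ℕ) (hk : 1 ≤ k)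
    (A : Subgroup (π ⧸ (⊤ : Subgroup π).lowerCentralSeries (k + 1)))
    (hA : A = ((⊤ : Subgroup π).lowerCentralSeries k).map
      (QuotientGroup.mk' ((⊤ : Subgroup π).lowerCentralSeries (k + 1)))) :
    -- x⁻¹ f(x) ∈ Γ_{k+1}π, and τ_k(f) is a well-defined homomorphism
    (∀ f : π ≃* π,
      (∀ x : π, (QuotientGroup.mk (f x) : π ⧸ (⊤ : Subgroup π).lowerCentralSeries k)
          = QuotientGroup.mk x) →
      (∀ x : π, x⁻¹ * f x ∈ (⊤ : Subgroup π).lowerCentralSeries k) ∧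
      (∃! τ : (π ⧸ (⊤ : Subgroup π).lowerCentralSeries 1) →* (π ⧸ (⊤ : Subgroup π).lowerCentralSeries (k + 1)),
        (∀ y, τ y ∈ A) ∧
        ∀ x : π, τ (QuotientGroup.mk x) = QuotientGroup.mk (x⁻¹ * f x))) ∧
    -- τ_k is a group homomorphism: τ_k(f ∘ g) = τ_k(f) · τ_k(g)
    (∀ f g : π ≃* π,
      (∀ x : π, (QuotientGroup.mk (f x) : π ⧸ (⊤ : Subgroup π).lowerCentralSeries k)
          = QuotientGroup.mk x) →
      (∀ x : π, (QuotientGroup.mk (g x) : π ⧸ (⊤ : Subgroup π).lowerCentralSeries k)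
          = QuotientGroup.mk x) →
      ∀ τf τg τfg : (π ⧸ (⊤ : Subgroup π).lowerCentralSeries 1) →* (π ⧸ (⊤ : Subgroup π).lowerCentralSeries (k + 1)),
        (∀ x : π, τf (QuotientGroup.mk x) = QuotientGroup.mk (x⁻¹ * f x)) →
        (∀ x : π, τg (QuotientGroup.mk x) = QuotientGroup.mk (x⁻¹ * g x)) →
        (∀ x : π, τfg (QuotientGroup.mk x) = QuotientGroup.mk (x⁻¹ * f (g x))) →
        ∀ y, τfg y = τf y * τg y) ∧
    -- τ_k(f) = 0 iff f induces the identity automorphism of π/Γ_{k+2}π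
    (∀ f : π ≃* π,
      (∀ x : π, (QuotientGroup.mk (f x) : π ⧸ (⊤ : Subgroup π).lowerCentralSeries k)
          = QuotientGroup.mk x) →
      ∀ τ : (π ⧸ (⊤ : Subgroup π).lowerCentralSeries 1) →* (π ⧸ (⊤ : Subgroup π).lowerCentralSeries (k + 1)),
        (∀ x : π, τ (QuotientGroup.mk x) = QuotientGroup.mk (x⁻¹ * f x)) →
        ((∀ y, τ y = 1) ↔
          ∀ x : π, (QuotientGroup.mk (f x) : π ⧸ (⊤ : Subgroup π).lowerCentralSeries (k + 1))
            = QuotientGroup.mk x)) := by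
  set Γ := (⊤ : Subgroup π).lowerCentralSeries
  have hcentral : ⁅Γ k, ⊤⁆ ≤ Γ (k + 1) := le_rfl
  have hΓ : Γ k ≤ commutator π := Subgroup.lowerCentralSeries_antitone ⊤ hk
  have hdisp (f : π ≃* π) (hf : ∀ x, (f x : π ⧸ Γ k) = x) (x : π) : x⁻¹ * f x ∈ Γ k :=
    QuotientGroup.eq.mp (hf x).symm
  refine ⟨fun f hf =>
    ⟨hdisp f hf, ⟨johnsonHom f (hdisp f hf) hcentral, ⟨?_, johnsonHom_mk _ _⟩, ?_⟩⟩,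
    fun f g hf hg τf τg τfg hτf hτg hτfg y => ?_, fun f hf τ hτ => ?_⟩
  · exact hA ▸ johnsonHom_mem_map_mk (hdisp f hf) hcentral
  · exact fun τ ⟨_, hτ⟩ => monoidHom_ext _ (MonoidHom.ext hτ)
  · induction y using QuotientGroup.induction_on with
    | H x =>
      rw [hτfg, hτf, hτg]
      exact mk_inv_mul_apply_eq_mul (hdisp f hf) hcentral hΓ (hdisp g hg x)
  · simp only [mk_surjective.forall, hτ, mk_inv_mul_eq_one_iff]
end

section
/- Let 𝔤 be a Lie algebra over ℚ which is nilpotent of class at most 2, i.e., ⁅⁅a,b⁆,c⁆ = 0 for all a, b, c ∈ 𝔤. For a, b ∈ 𝔤 write a∗b := a + b + (1/2)⁅a,b⁆. Let W ⊆ ⋀²_ℚ 𝔤 be the ℚ-subspace spanned by all elements u ∧ v with u, v in the derived ideal ⁅𝔤,𝔤⁆. Then for all g, h, k ∈ 𝔤, the following congruence holds in ⋀²_ℚ 𝔤 modulo W: (1/2)h∧g + (1/12)(h−g)∧⁅h,g⁆ − (1/2)(k∗h)∧g − (1/12)((k∗h)−g)∧⁅k∗h, g⁆ + (1/2)k∧(h∗g)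 + (1/12)(k−(h∗g))∧⁅k, h∗g⁆ − (1/2)k∧h − (1/12)(k−h)∧⁅k,h⁆ ≡ (1/6)·( h∧⁅g,k⁆ + k∧⁅h,g⁆ + g∧⁅k,h⁆ ). -/
/-- The wedge `u ∧ v` of two elements of a `ℚ`-Lie algebra, realized as the product
`ι u * ι v` in the exterior algebra of the underlying `ℚ`-vector space (such products
span the second exterior power `⋀²`). -/
noncomputable def wedge2 (L : Type*) [LieRing L] [LieAlgebra ℚ L] (u v : L) :
    ExteriorAlgebra ℚ L :=
  ExteriorAlgebra.ι ℚ u * ExteriorAlgebra.ι ℚ v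

/-- The Baker–Campbell–Hausdorff product truncated to class 2:
`a ∗ b = a + b + (1/2)⁅a,b⁆`. -/
def bchStar (L : Type*) [LieRing L] [LieAlgebra ℚ L] (a b : L) : L :=
  a + b + (1 / 2 : ℚ) • ⁅a, b⁆

/-- the degree-2 Suslin–Wodzicki computation in a class-2 nilpotent
`ℚ`-Lie algebra `𝔤`: modulo the subspace `W` spanned by wedges `u ∧ v` with
`u, v ∈ ⁅𝔤,𝔤⁆`, one has
`SW₂(∂₃(k|h|g)) ≡ (1/6)(h∧⁅g,k⁆ + k∧⁅h,g⁆ + g∧⁅k,h⁆)`. -/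
theorem stmt15 (L : Type*) [LieRing L] [LieAlgebra ℚ L]
    (hnil : ∀ a b c : L, ⁅⁅a, b⁆, c⁆ = 0)
    (W : Submodule ℚ (ExteriorAlgebra ℚ L))
    (hW : W = Submodule.span ℚ
      {w | ∃ u ∈ Submodule.span ℚ {x : L | ∃ a b : L, ⁅a, b⁆ = x},
           ∃ v ∈ Submodule.span ℚ {x : L | ∃ a b : L, ⁅a, b⁆ = x},
           w = wedge2 L u v})
    (g h k : L) :
    ((1 / 2 : ℚ) • wedge2 L h g + (1 / 12 : ℚ) • wedge2 L (h - g) ⁅h, g⁆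
        - (1 / 2 : ℚ) • wedge2 L (bchStar L k h) g
        - (1 / 12 : ℚ) • wedge2 L (bchStar L k h - g) ⁅bchStar L k h, g⁆
        + (1 / 2 : ℚ) • wedge2 L k (bchStar L h g)
        + (1 / 12 : ℚ) • wedge2 L (k - bchStar L h g) ⁅k, bchStar L h g⁆
        - (1 / 2 : ℚ) • wedge2 L k h
        - (1 / 12 : ℚ) • wedge2 L (k - h) ⁅k, h⁆)
      - (1 / 6 : ℚ) • (wedge2 L h ⁅g, k⁆ + wedge2 L k ⁅h, g⁆ + wedge2 L g ⁅k, h⁆)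
      ∈ W := by
  have hnil' : ∀ a b c : L, ⁅c, ⁅a, b⁆⁆ = 0 := by
    intro a b c
    rw [← lie_skew, hnil, neg_zero]
  have key : ((1 / 2 : ℚ) • wedge2 L h g + (1 / 12 : ℚ) • wedge2 L (h - g) ⁅h, g⁆
        - (1 / 2 : ℚ) • wedge2 L (bchStar L k h) g
        - (1 / 12 : ℚ) • wedge2 L (bchStar L k h - g) ⁅bchStar L k h, g⁆
        + (1 / 2 : ℚ) • wedge2 L k (bchStar L h g)
        + (1 / 12 : ℚ) • wedge2 L (k - bchStar L h g) ⁅k, bchStar L h g⁆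
        - (1 / 2 : ℚ) • wedge2 L k h
        - (1 / 12 : ℚ) • wedge2 L (k - h) ⁅k, h⁆)
      - (1 / 6 : ℚ) • (wedge2 L h ⁅g, k⁆ + wedge2 L k ⁅h, g⁆ + wedge2 L g ⁅k, h⁆)
      = (-1/24 : ℚ) • wedge2 L ⁅k, h⁆ ⁅k, g⁆ + (-1/24 : ℚ) • wedge2 L ⁅h, g⁆ ⁅k, g⁆ := by
    have swap : ∀ u v : L, ExteriorAlgebra.ι ℚ v * ExteriorAlgebra.ι ℚ u
        = -(ExteriorAlgebra.ι ℚ u * ExteriorAlgebra.ι ℚ v) := by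
      intro u v
      exact eq_neg_of_add_eq_zero_right (ExteriorAlgebra.ι_add_mul_swap u v)
    have hgk : ⁅g, k⁆ = -⁅k, g⁆ := by rw [← lie_skew k g, neg_neg]
    simp only [wedge2, bchStar, hgk, add_lie, lie_add, sub_lie, lie_sub, smul_lie, lie_smul,
      hnil, hnil', lie_self, smul_zero, add_zero, zero_add]
    simp only [map_add, map_sub, map_smul, map_neg, add_mul, sub_mul, mul_add, mul_sub,
      smul_mul_assoc, mul_smul_comm, neg_mul, mul_neg, ExteriorAlgebra.ι_sq_zero]
    rw [swap ⁅k,h⁆ g, swap ⁅h,g⁆ ⁅k,h⁆]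
    module
  rw [key, hW]
  have hmem : ∀ a b c d : L, wedge2 L ⁅a,b⁆ ⁅c,d⁆ ∈ Submodule.span ℚ
      {w | ∃ u ∈ Submodule.span ℚ {x : L | ∃ a b : L, ⁅a, b⁆ = x},
           ∃ v ∈ Submodule.span ℚ {x : L | ∃ a b : L, ⁅a, b⁆ = x},
           w = wedge2 L u v} := by
    intro a b c d
    exact Submodule.subset_span ⟨⁅a,b⁆, Submodule.subset_span ⟨a, b, rfl⟩,
      ⁅c,d⁆, Submodule.subset_span ⟨c, d, rfl⟩, rfl⟩
  exact Submodule.add_mem _ (Submodule.smul_mem _ _ (hmem k h k g))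
    (Submodule.smul_mem _ _ (hmem h g k g))
end
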